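/- arXiv:2112.08537 — 5 statements merged into one kernel-verified Lean document; each statement's English description precedes it below -/
import Mathlib

section
/- Let R be a universal R-matrix for H with Drinfeld u-operator u. Then S²(a)·u = u·a for every a ∈ H. -/
/-!
Write `u = ν(R)` with `ν(x ⊗ y) = S(y) x`. Since `ν(R w) = ν((u ⊗ 1) w)`, the intertwining relation
`R Δ(y) = Δᵀ(y) R` together with `ν ∘ Δᵀ = m (S ⊗ id) Δ = ε` gives `∑ S(y₂) u y₁ = ε(y) u`.
Hence the sum `∑ S²(x₃) S(x₂) u x₁` over `Δ²(x)` collapses to `S²(x) u` when grouped as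
`(Δ ⊗ id) Δ x` and, by `∑ x₁ S(x₂) = ε(x)`, to `u x` when grouped as `(id ⊗ Δ) Δ x`.
-/

open TensorProduct

noncomputable section

variable (k H : Type*) [CommRing k] [Ring H] [HopfAlgebra k H]

/-- The k-linear swap `τ : H ⊗ H → H ⊗ H`, `x ⊗ y ↦ y ⊗ x`. -/
def tau : H ⊗[k] H →ₗ[k] H ⊗[k] H := (TensorProduct.comm k H H).toLinearMap

/-- The opposite comultiplication `Δᵀ := τ ∘ Δ`. -/
def DeltaT : H →ₗ[k] H ⊗[k] H := tau k H ∘ₗ Coalgebra.comul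

/-- Embedding of `H ⊗ H` into slots (1,2) of `H ⊗ (H ⊗ H)`: `x ⊗ y ↦ x ⊗ y ⊗ 1`. -/
def emb12 : H ⊗[k] H →ₐ[k] H ⊗[k] (H ⊗[k] H) :=
  Algebra.TensorProduct.map (AlgHom.id k H) Algebra.TensorProduct.includeLeft

/-- Embedding of `H ⊗ H` into slots (1,3) of `H ⊗ (H ⊗ H)`: `x ⊗ y ↦ x ⊗ 1 ⊗ y`. -/
def emb13 : H ⊗[k] H →ₐ[k] H ⊗[k] (H ⊗[k] H) :=
  Algebra.TensorProduct.map (AlgHom.id k H) Algebra.TensorProduct.includeRight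

/-- Embedding of `H ⊗ H` into slots (2,3) of `H ⊗ (H ⊗ H)`: `x ⊗ y ↦ 1 ⊗ x ⊗ y`. -/
def emb23 : H ⊗[k] H →ₐ[k] H ⊗[k] (H ⊗[k] H) :=
  Algebra.TensorProduct.includeRight

/-- The map `Δ ⊗ id : H ⊗ H → H ⊗ (H ⊗ H)`. -/
def DeltaId : H ⊗[k] H →ₗ[k] H ⊗[k] (H ⊗[k] H) :=
  (TensorProduct.assoc k H H H).toLinearMap ∘ₗ
    TensorProduct.map Coalgebra.comul LinearMap.id

/-- The map `id ⊗ Δ : H ⊗ H → H ⊗ (H ⊗ H)`. -/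
def IdDelta : H ⊗[k] H →ₗ[k] H ⊗[k] (H ⊗[k] H) :=
  TensorProduct.map LinearMap.id Coalgebra.comul

/-- `R` is a universal R-matrix: it is invertible, satisfies the two hexagon
relations `(Δ⊗id)R = R₁₃R₂₃`, `(id⊗Δ)R = R₁₃R₁₂`, and intertwines `Δ` with `Δᵀ`. -/
structure IsUniversalRMatrix (R : H ⊗[k] H) : Prop where
  isUnit : IsUnit R
  hexagon1 : DeltaId k H R = emb13 k H R * emb23 k H R
  hexagon2 : IdDelta k H R = emb13 k H R * emb12 k H R
  intertwine : ∀ a : H, R * Coalgebra.comul a = DeltaT k H a * R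

/-- The Drinfeld u-operator `u = m ((S ⊗ id) (τ R))`. -/
def uOp (R : H ⊗[k] H) : H :=
  LinearMap.mul' k H
    (TensorProduct.map (HopfAlgebra.antipode (R := k)) LinearMap.id (tau k H R))

theorem Coalgebra.sum_counit_right_smul_left {R A ι : Type*} [CommSemiring R] [AddCommMonoid A]
    [Module R A] [Coalgebra R A] {a : A} (r : Coalgebra.Repr R a ι) :
    ∑ i ∈ r.index, Coalgebra.counit (R := R) (r.right i) • r.left i = a := by
  simpa only [map_sum, TensorProduct.rid_tmul, one_smul] using
    congr(TensorProduct.rid R R A $(Coalgebra.sum_tmul_counit_eq r))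

theorem HopfAlgebra.antipode_algebraMap {R A : Type*} [CommSemiring R] [Semiring A]
    [HopfAlgebra R A] (c : R) : HopfAlgebra.antipode R (algebraMap R A c) = algebraMap R A c := by
  rw [Algebra.algebraMap_eq_smul_one, map_smul, HopfAlgebra.antipode_one]

section

variable {k H}

open Coalgebra HopfAlgebra

/-- The linear map underlying `uOp`: `uOp k H R` is definitionally `uOpₗ R`. -/
def uOpₗ : H ⊗[k] H →ₗ[k] H :=
  LinearMap.mul' k H ∘ₗ TensorProduct.map (antipode k) LinearMap.id ∘ₗ tau k H

@[simp]
theorem uOpₗ_tmul (x y : H) : uOpₗ (x ⊗ₜ[k] y) = antipode k y * x := by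
  simp [uOpₗ, tau]

theorem uOpₗ_mul (R w : H ⊗[k] H) : uOpₗ (R * w) = uOpₗ ((uOpₗ R ⊗ₜ[k] 1) * w) := by
  induction R using TensorProduct.induction_on with
  | zero => simp
  | add R₁ R₂ h₁ h₂ => simp only [add_mul, map_add, add_tmul, h₁, h₂]
  | tmul x y =>
    induction w using TensorProduct.induction_on with
    | zero => simp
    | add w₁ w₂ h₁ h₂ => simp only [mul_add, map_add, h₁, h₂]
    | tmul p q =>
      simp only [Algebra.TensorProduct.tmul_mul_tmul, uOpₗ_tmul, one_mul,
        antipode_mul_antidistrib, mul_assoc]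

theorem uOpₗ_tau (w : H ⊗[k] H) :
    uOpₗ (tau k H w) = LinearMap.mul' k H ((antipode k).rTensor H w) := by
  induction w using TensorProduct.induction_on with
  | zero => simp
  | add w₁ w₂ h₁ h₂ => simp only [map_add, h₁, h₂]
  | tmul p q => simp [tau]

theorem uOpₗ_deltaT (y : H) : uOpₗ (DeltaT k H y) = algebraMap k H (counit (R := k) y) :=
  (uOpₗ_tau _).trans (mul_antipode_rTensor_comul_apply y)

theorem uOpₗ_tmul_one_mul_comul {R : H ⊗[k] H}
    (hR : ∀ a : H, R * comul a = DeltaT k H a * R) (y : H) :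
    uOpₗ ((uOpₗ R ⊗ₜ[k] 1) * comul y) = counit (R := k) y • uOpₗ R := by
  rw [← uOpₗ_mul, hR, uOpₗ_mul, uOpₗ_deltaT, Algebra.algebraMap_eq_smul_one, ← smul_tmul',
    ← Algebra.TensorProduct.one_def, smul_mul_assoc, one_mul, map_smul]

theorem sum_antipode_right_mul_mul_left {u : H}
    (hu : ∀ y : H, uOpₗ ((u ⊗ₜ[k] 1) * comul y) = counit (R := k) y • u)
    {y : H} {ι : Type*} (r : Repr k y ι) :
    ∑ i ∈ r.index, antipode k (r.right i) * (u * r.left i) = counit (R := k) y • u := by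
  simp [← hu, ← r.eq, Finset.mul_sum, map_sum]

theorem antipode_antipode_mul_eq_mul {u : H}
    (hu : ∀ y : H, uOpₗ ((u ⊗ₜ[k] 1) * comul y) = counit (R := k) y • u) (x : H) :
    antipode k (antipode k x) * u = u * x := by
  let r := ℛ k x
  let r₁ i := ℛ k (r.left i)
  let r₂ i := ℛ k (r.right i)
  let Φ : H ⊗[k] (H ⊗[k] H) →ₗ[k] H :=
    LinearMap.mul' k H ∘ₗ
      TensorProduct.map (LinearMap.mulRight k u ∘ₗ antipode k ∘ₗ LinearMap.mul' k H ∘ₗ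
        (antipode k).lTensor H) LinearMap.id ∘ₗ
      (TensorProduct.comm k H (H ⊗[k] H)).toLinearMap
  have hΦ : ∀ a b c : H, Φ (a ⊗ₜ (b ⊗ₜ c)) = antipode k (b * antipode k c) * (u * a) := by
    simp [Φ, mul_assoc]
  have coassoc := congr(Φ $(sum_tmul_tmul_eq r r₁ r₂))
  simp only [map_sum, hΦ] at coassoc
  calc antipode k (antipode k x) * u
      = ∑ i ∈ r.index, antipode k (antipode k (r.right i)) * (counit (R := k) (r.left i) • u) := by
        conv_lhs => rw [← sum_counit_smul r]
        simp [map_sum, Finset.sum_mul]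
    _ = ∑ i ∈ r.index, ∑ j ∈ (r₁ i).index,
          antipode k ((r₁ i).right j * antipode k (r.right i)) * (u * (r₁ i).left j) := by
        refine Finset.sum_congr rfl fun i _ => ?_
        rw [← sum_antipode_right_mul_mul_left hu (r₁ i), Finset.mul_sum]
        simp only [antipode_mul_antidistrib, mul_assoc]
    _ = ∑ i ∈ r.index, ∑ j ∈ (r₂ i).index,
          antipode k ((r₂ i).left j * antipode k ((r₂ i).right j)) * (u * r.left i) := coassoc
    _ = ∑ i ∈ r.index, counit (R := k) (r.right i) • (u * r.left i) := by
        simp only [← Finset.sum_mul, ← map_sum, sum_mul_antipode_eq_algebraMap_counit,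
          antipode_algebraMap, Algebra.smul_def]
    _ = u * x := by
        simp only [← mul_smul_comm, ← Finset.mul_sum, Coalgebra.sum_counit_right_smul_left]

end

/-- For the Drinfeld u-operator: `S²(a) · u = u · a` for all `a ∈ H`. -/
theorem antipode_sq_mul_uOp (R : H ⊗[k] H) (hR : IsUniversalRMatrix k H R) :
    ∀ a : H,
      HopfAlgebra.antipode (R := k) (HopfAlgebra.antipode (R := k) a) * uOp k H R =
        uOp k H R * a :=
  antipode_antipode_mul_eq_mul (uOpₗ_tmul_one_mul_comul hR.intertwine)
end
end

section
/- Let R be a universal R-matrix for H with Drinfeld u-operator u. Then u is invertible in H, with inverse u⁻¹ = m((S⁻¹⊗id)(τ(R⁻¹))) (writing R⁻¹ = Σᵢ cᵢ⊗dᵢ, u⁻¹ = Σᵢ S⁻¹(dᵢ)cᵢ). -/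
open TensorProduct

noncomputable section

variable (k H : Type*) [CommRing k] [Ring H] [HopfAlgebra k H]

/-! As a function of `w ∈ H ⊗ H`, `uOp w = m((S ⊗ id)(τ w))` satisfies
`uOp (w (a ⊗ b)) = S(b) (uOp w) a`. With `u = uOp R`, the relation `R Δ(y) = Δᵀ(y) R` therefore
gives `Σ S(y₂) u y₁ = uOp (R Δ(y)) = uOp (Δᵀ(y) R) = ε(y) u`. In the convolution algebra of linear
maps `H → Hᵐᵒᵖ` this reads `(u ·) ⋆ S = u ε`; since `S ⋆ S² = ε` there, convolving on the right
with `S²` gives Drinfeld's relation `u x = S²(x) u`. For `v = Σ S⁻¹(dᵢ) cᵢ` it follows that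
`u v = uOp (R R⁻¹) = 1`, and then `S²(v) u = u v = 1`: `u` has the left inverse `S²(v)` and the
right inverse `v`, so the two agree. -/

section

open Coalgebra HopfAlgebra LinearMap WithConv

variable {k H}

@[simp] lemma tau_tmul (a b : H) : tau k H (a ⊗ₜ b) = b ⊗ₜ a := rfl

@[simp] lemma uOp_zero : uOp k H 0 = 0 := by simp [uOp]

@[simp] lemma uOp_add (v w : H ⊗[k] H) : uOp k H (v + w) = uOp k H v + uOp k H w := by
  simp [uOp]

@[simp] lemma uOp_tmul (a b : H) : uOp k H (a ⊗ₜ b) = antipode k b * a := by simp [uOp]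

@[simp] lemma uOp_one : uOp k H 1 = 1 := by simp [Algebra.TensorProduct.one_def]

lemma uOp_mul_tmul (w : H ⊗[k] H) (a b : H) :
    uOp k H (w * a ⊗ₜ b) = antipode k b * uOp k H w * a := by
  induction w using TensorProduct.induction_on with
  | zero => simp
  | tmul c d => simp [antipode_mul_antidistrib, mul_assoc]
  | add v w hv hw => simp [add_mul, hv, hw, mul_add]

lemma uOp_mul_of_eq_algebraMap {w : H ⊗[k] H} {t : k} (hw : uOp k H w = algebraMap k H t)
    (r : H ⊗[k] H) : uOp k H (w * r) = t • uOp k H r := by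
  induction r using TensorProduct.induction_on with
  | zero => simp
  | tmul c d => rw [uOp_mul_tmul, hw, uOp_tmul, Algebra.smul_def, ← Algebra.commutes, mul_assoc]
  | add v w hv hw => simp [mul_add, hv, hw]

lemma uOp_deltaT (y : H) : uOp k H (DeltaT k H y) = algebraMap k H (counit y) := by
  simp only [uOp, DeltaT, tau, LinearMap.comp_apply, LinearEquiv.coe_coe, comm_comm]
  exact mul_antipode_rTensor_comul_apply y

lemma uOp_mul_comul {R : H ⊗[k] H} (hR : ∀ a : H, R * comul (R := k) a = DeltaT k H a * R)
    (y : H) : uOp k H (R * comul (R := k) y) = counit (R := k) y • uOp k H R := by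
  rw [hR, uOp_mul_of_eq_algebraMap (uOp_deltaT y)]

variable (k H) in
lemma convMul_antipodeAlgHomOp_comp_antipode :
    toConv (antipodeAlgHomOp k H).toLinearMap *
      toConv ((antipodeAlgHomOp k H).toLinearMap ∘ₗ antipode k) = 1 := by
  have h := algHom_comp_convMul_distrib (antipodeAlgHomOp k H) (toConv LinearMap.id)
    (toConv (antipode k))
  rw [id_mul_antipode, LinearMap.comp_id] at h
  rw [← toConv_ofConv (_ * _), ← h]
  ext y
  simp

lemma convMul_mulLeft_uOp_antipodeAlgHomOp {R : H ⊗[k] H}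
    (hR : ∀ a : H, R * comul (R := k) a = DeltaT k H a * R) :
    toConv ((MulOpposite.opLinearEquiv k).toLinearMap ∘ₗ mulLeft k (uOp k H R)) *
      toConv (antipodeAlgHomOp k H).toLinearMap = MulOpposite.op (uOp k H R) • 1 := by
  have hconv (w : H ⊗[k] H) : mul' k Hᵐᵒᵖ (map ((MulOpposite.opLinearEquiv k).toLinearMap ∘ₗ
      mulLeft k (uOp k H R)) (antipodeAlgHomOp k H).toLinearMap w) =
      MulOpposite.op (uOp k H (R * w)) := by
    induction w using TensorProduct.induction_on with
    | zero => simp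
    | tmul c d => simp [uOp_mul_tmul, mul_assoc]
    | add v w hv hw => simp [mul_add, hv, hw]
  ext y
  rw [convMul_apply, hconv, uOp_mul_comul hR]
  simp [Algebra.smul_def]

lemma uOp_mul_eq_antipode_antipode_mul {R : H ⊗[k] H}
    (hR : ∀ a : H, R * comul (R := k) a = DeltaT k H a * R) (x : H) :
    uOp k H R * x = antipode k (antipode k x) * uOp k H R := by
  have h : toConv ((MulOpposite.opLinearEquiv k).toLinearMap ∘ₗ mulLeft k (uOp k H R)) =
      MulOpposite.op (uOp k H R) • toConv ((antipodeAlgHomOp k H).toLinearMap ∘ₗ antipode k) := by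
    rw [← mul_one (toConv _), ← convMul_antipodeAlgHomOp_comp_antipode, ← mul_assoc,
      convMul_mulLeft_uOp_antipodeAlgHomOp hR, smul_one_mul]
  simpa using congr(MulOpposite.unop ($h x))

lemma uOp_mul_mul'_map_tau {R : H ⊗[k] H} (hR : ∀ a : H, R * comul (R := k) a = DeltaT k H a * R)
    {Sinv : H →ₗ[k] H} (hS : ∀ a : H, antipode k (Sinv a) = a) (w : H ⊗[k] H) :
    uOp k H R * mul' k H (map Sinv LinearMap.id (tau k H w)) = uOp k H (R * w) := by
  induction w using TensorProduct.induction_on with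
  | zero => simp
  | tmul c d =>
    rw [tau_tmul, map_tmul, mul'_apply, LinearMap.id_apply, ← mul_assoc,
      uOp_mul_eq_antipode_antipode_mul hR, hS, uOp_mul_tmul]
  | add v w hv hw => simp [mul_add, hv, hw]

end

theorem uOp_invertible (R R' : H ⊗[k] H) (hR : IsUniversalRMatrix k H R)
    (hRR' : R * R' = 1)
    (Sinv : H →ₗ[k] H)
    (hS2 : ∀ a : H, HopfAlgebra.antipode (R := k) (Sinv a) = a) :
    uOp k H R *
        LinearMap.mul' k H (TensorProduct.map Sinv LinearMap.id (tau k H R')) = 1 ∧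
    LinearMap.mul' k H (TensorProduct.map Sinv LinearMap.id (tau k H R')) *
        uOp k H R = 1 := by
  set v := LinearMap.mul' k H (TensorProduct.map Sinv LinearMap.id (tau k H R'))
  have hright : uOp k H R * v = 1 := by
    rw [uOp_mul_mul'_map_tau hR.intertwine hS2, hRR', uOp_one]
  have hleft : HopfAlgebra.antipode k (HopfAlgebra.antipode k v) * uOp k H R = 1 := by
    rw [← uOp_mul_eq_antipode_antipode_mul hR.intertwine, hright]
  exact ⟨hright, left_inv_eq_right_inv hleft hright ▸ hleft⟩
end
end

section
/- Let R be a universal R-matrix for H with Drinfeld u-operator u. Then u⊗u commutes with τ(R)·R in the algebra H⊗H: (u⊗u)·(τ(R)·R) = (τ(R)·R)·(u⊗u). -/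
open TensorProduct

noncomputable section

variable (k H : Type*) [CommRing k] [Ring H] [HopfAlgebra k H]

/-!
The hexagon relations, contracted with the antipode, give `(S ⊗ id) R = R⁻¹` and
`(id ⊗ S) R⁻¹ = R` (the counit contractions `(ε ⊗ id) R` and `(id ⊗ ε) R⁻¹` that appear are
idempotent units, hence `1`), so `(S ⊗ S) R = R`. As `S ⊗ S` is an anti-endomorphism of `H ⊗ H`
commuting with `τ`, it exchanges `τ(R) R` and `R τ(R)`, so `S² ⊗ S²` fixes `τ(R) R`.

The map `c ⊗ d ↦ S(d) c` sends `R` to `u` and turns products into the right action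
`w ↦ Σ S(d) w c` of `H ⊗ H`; applied to `R Δ(a) = Δᵀ(a) R` this gives `Σ S(a₂) u a₁ = ε(a) u`,
and coassociativity turns that into `u a = S²(a) u`. Hence `(u ⊗ u) z = (S² ⊗ S²)(z) (u ⊗ u)`
for every `z`, and `z = τ(R) R` is fixed by `S² ⊗ S²`.
-/

open Coalgebra HopfAlgebra

lemma tmul_mul_eq_map_mul {K B C : Type*} [CommSemiring K]
    [Semiring B] [Algebra K B] [Semiring C] [Algebra K C] {f : B →ₗ[K] B} {g : C →ₗ[K] C}
    {w : B} {v : C} (hf : ∀ b, w * b = f b * w) (hg : ∀ c, v * c = g c * v)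
    (z : B ⊗[K] C) : (w ⊗ₜ v) * z = TensorProduct.map f g z * (w ⊗ₜ v) := by
  induction z using TensorProduct.induction_on with
  | zero => simp
  | add z z' hz hz' => simp only [mul_add, add_mul, map_add, hz, hz']
  | tmul b c => simp [hf, hg]

section HopfAlgebra

variable {K A : Type*} [CommSemiring K] [Semiring A] [HopfAlgebra K A]

variable (K) in
def antipodeConj (w : A) : A ⊗[K] A →ₗ[K] A :=
  LinearMap.mul' K A ∘ₗ (TensorProduct.comm K A A).toLinearMap ∘ₗ
    (LinearMap.mulRight K w ∘ₗ antipode K).lTensor A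

@[simp]
lemma antipodeConj_tmul (w c d : A) : antipodeConj K w (c ⊗ₜ d) = antipode K d * w * c := by
  simp [antipodeConj]

lemma antipodeConj_smul (r : K) (w : A) (p : A ⊗[K] A) :
    antipodeConj K (r • w) p = r • antipodeConj K w p := by
  induction p using TensorProduct.induction_on with
  | zero => simp
  | add p q hp hq => simp only [map_add, hp, hq, smul_add]
  | tmul c d => simp

lemma antipodeConj_mul (w : A) (p q : A ⊗[K] A) :
    antipodeConj K w (p * q) = antipodeConj K (antipodeConj K w p) q := by
  induction q using TensorProduct.induction_on with
  | zero => simp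
  | add q q' hq hq' => simp only [mul_add, map_add, hq, hq']
  | tmul c d =>
    induction p using TensorProduct.induction_on with
    | zero => simp
    | add p p' hp hp' => simp [add_mul, hp, hp', mul_add]
    | tmul x y => simp [antipode_mul_antidistrib, mul_assoc]

lemma antipodeConj_one_comm_comul (a : A) :
    antipodeConj K 1 (TensorProduct.comm K A A (comul a)) = counit (R := K) a • 1 := by
  have h : antipodeConj K 1 ∘ₗ (TensorProduct.comm K A A).toLinearMap =
      LinearMap.mul' K A ∘ₗ (antipode K).rTensor A := by
    ext x y
    simp
  rw [← LinearEquiv.coe_toLinearMap, ← LinearMap.comp_apply, h, LinearMap.comp_apply,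
    mul_antipode_rTensor_comul_apply, Algebra.algebraMap_eq_smul_one]

lemma mul_eq_antipode_antipode_mul {w : A}
    (hw : ∀ a, antipodeConj K w (comul a) = counit (R := K) a • w) (a : A) :
    w * a = antipode K (antipode K a) * w := by
  -- `Φ (x ⊗ y ⊗ z) = S (y S(z)) w x`, evaluated on both sides of coassociativity at `a`.
  let Φ : A ⊗[K] (A ⊗[K] A) →ₗ[K] A :=
    LinearMap.mul' K A ∘ₗ (TensorProduct.comm K A A).toLinearMap ∘ₗ
      TensorProduct.map (LinearMap.mulLeft K w)
        (antipode K ∘ₗ LinearMap.mul' K A ∘ₗ (antipode K).lTensor A)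
  have hΦ (x : A) (t : A ⊗[K] A) :
      Φ (x ⊗ₜ t) = antipode K (LinearMap.mul' K A ((antipode K).lTensor A t)) * (w * x) := by
    simp [Φ]
  have hΦ_assoc (t : A ⊗[K] A) (y : A) :
      Φ (TensorProduct.assoc K A A A (t ⊗ₜ y)) =
        antipode K (antipode K y) * antipodeConj K w t := by
    induction t using TensorProduct.induction_on with
    | zero => simp
    | add t t' ht ht' => simp only [TensorProduct.add_tmul, map_add, ht, ht', mul_add]
    | tmul x z => simp [hΦ, antipode_mul_antidistrib, mul_assoc]
  have hΦ_lTensor (t : A ⊗[K] A) :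
      Φ ((comul (R := K)).lTensor A t) =
        w * TensorProduct.rid K A ((counit (R := K)).lTensor A t) := by
    induction t using TensorProduct.induction_on with
    | zero => simp
    | add t t' ht ht' => simp only [map_add, ht, ht', mul_add]
    | tmul x y => simp [hΦ, Algebra.algebraMap_eq_smul_one]
  have hΦ_rTensor (t : A ⊗[K] A) :
      Φ (TensorProduct.assoc K A A A ((comul (R := K)).rTensor A t)) =
        antipode K (antipode K (TensorProduct.lid K A ((counit (R := K)).rTensor A t))) * w := by
    induction t using TensorProduct.induction_on with
    | zero => simp
    | add t t' ht ht' => simp only [map_add, ht, ht', add_mul]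
    | tmul x y => simp [hΦ_assoc, hw]
  calc w * a = Φ ((comul (R := K)).lTensor A (comul a)) := by
        rw [hΦ_lTensor, lTensor_counit_comul, TensorProduct.rid_tmul, one_smul]
    _ = Φ (TensorProduct.assoc K A A A ((comul (R := K)).rTensor A (comul a))) := by
        rw [coassoc_apply]
    _ = antipode K (antipode K a) * w := by
        rw [hΦ_rTensor, rTensor_counit_comul, TensorProduct.lid_tmul, one_smul]

lemma map_antipode_antipode_mul (p q : A ⊗[K] A) :
    TensorProduct.map (antipode K) (antipode K) (p * q) =
      TensorProduct.map (antipode K) (antipode K) q *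
        TensorProduct.map (antipode K) (antipode K) p := by
  induction p using TensorProduct.induction_on with
  | zero => simp
  | add p p' hp hp' => simp only [add_mul, mul_add, map_add, hp, hp']
  | tmul a b =>
    induction q using TensorProduct.induction_on with
    | zero => simp
    | add q q' hq hq' => simp only [add_mul, mul_add, map_add, hq, hq']
    | tmul c d => simp [antipode_mul_antidistrib]

variable (K A)

def epsId : A ⊗[K] A →ₐ[K] A :=
  (Algebra.TensorProduct.lid K A).toAlgHom.comp
    (Algebra.TensorProduct.map (Bialgebra.counitAlgHom K A) (AlgHom.id K A))

def idEps : A ⊗[K] A →ₐ[K] A :=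
  (Algebra.TensorProduct.rid K K A).toAlgHom.comp
    (Algebra.TensorProduct.map (AlgHom.id K A) (Bialgebra.counitAlgHom K A))

def mulSId : A ⊗[K] (A ⊗[K] A) →ₗ[K] A ⊗[K] A :=
  (LinearMap.mul' K A ∘ₗ (antipode K).rTensor A).rTensor A ∘ₗ
    (TensorProduct.assoc K A A A).symm.toLinearMap

def idMulS : A ⊗[K] (A ⊗[K] A) →ₗ[K] A ⊗[K] A :=
  (LinearMap.mul' K A ∘ₗ (antipode K).lTensor A).lTensor A

variable {K A}

@[simp] lemma epsId_tmul (x y : A) : epsId K A (x ⊗ₜ y) = counit (R := K) x • y := rfl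

@[simp] lemma idEps_tmul (x y : A) : idEps K A (x ⊗ₜ y) = counit (R := K) y • x := rfl

@[simp] lemma mulSId_tmul (x y z : A) :
    mulSId K A (x ⊗ₜ (y ⊗ₜ z)) = (antipode K x * y) ⊗ₜ z := by
  simp [mulSId]

@[simp] lemma idMulS_tmul (x y z : A) :
    idMulS K A (x ⊗ₜ (y ⊗ₜ z)) = x ⊗ₜ (y * antipode K z) := by
  simp [idMulS]

lemma epsId_map_antipode_id (z : A ⊗[K] A) :
    epsId K A (TensorProduct.map (antipode K) LinearMap.id z) = epsId K A z := by
  induction z using TensorProduct.induction_on with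
  | zero => simp
  | add z z' hz hz' => simp only [map_add, hz, hz']
  | tmul x y => simp

lemma idEps_map_id_antipode (z : A ⊗[K] A) :
    idEps K A (TensorProduct.map LinearMap.id (antipode K) z) = idEps K A z := by
  induction z using TensorProduct.induction_on with
  | zero => simp
  | add z z' hz hz' => simp only [map_add, hz, hz']
  | tmul x y => simp

end HopfAlgebra

section UniversalRMatrix

variable {k H}

lemma mulSId_deltaId (z : H ⊗[k] H) : mulSId k H (DeltaId k H z) = 1 ⊗ₜ epsId k H z := by
  induction z using TensorProduct.induction_on with
  | zero => simp
  | add z z' hz hz' => simp only [map_add, hz, hz', TensorProduct.tmul_add]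
  | tmul x y => simp [mulSId, DeltaId, Algebra.algebraMap_eq_smul_one, TensorProduct.smul_tmul]

lemma idMulS_idDelta (z : H ⊗[k] H) : idMulS k H (IdDelta k H z) = idEps k H z ⊗ₜ 1 := by
  induction z using TensorProduct.induction_on with
  | zero => simp
  | add z z' hz hz' => simp only [map_add, hz, hz', TensorProduct.add_tmul]
  | tmul x y => simp [idMulS, IdDelta, Algebra.algebraMap_eq_smul_one, TensorProduct.smul_tmul]

lemma mulSId_emb13_mul_emb23 (p q : H ⊗[k] H) :
    mulSId k H (emb13 k H p * emb23 k H q) =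
      TensorProduct.map (antipode k) LinearMap.id p * q := by
  induction p using TensorProduct.induction_on with
  | zero => simp
  | add p p' hp hp' => simp only [map_add, add_mul, hp, hp']
  | tmul a b =>
    induction q using TensorProduct.induction_on with
    | zero => simp
    | add q q' hq hq' => simp only [map_add, mul_add, hq, hq']
    | tmul c d => simp [emb13, emb23]

lemma idMulS_emb12_mul_emb13 (p q : H ⊗[k] H) :
    idMulS k H (emb12 k H p * emb13 k H q) =
      p * TensorProduct.map LinearMap.id (antipode k) q := by
  induction p using TensorProduct.induction_on with
  | zero => simp
  | add p p' hp hp' => simp only [map_add, add_mul, hp, hp']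
  | tmul a b =>
    induction q using TensorProduct.induction_on with
    | zero => simp
    | add q q' hq hq' => simp only [map_add, mul_add, hq, hq']
    | tmul c d => simp [emb12, emb13]

lemma idDelta_eq_algHom : IdDelta k H =
    (Algebra.TensorProduct.map (AlgHom.id k H) (Bialgebra.comulAlgHom k H)).toLinearMap :=
  TensorProduct.ext' fun _ _ => rfl

lemma idDelta_one : IdDelta k H 1 = 1 := by
  rw [idDelta_eq_algHom, AlgHom.toLinearMap_apply, map_one]

lemma idDelta_mul (p q : H ⊗[k] H) : IdDelta k H (p * q) = IdDelta k H p * IdDelta k H q := by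
  simp only [idDelta_eq_algHom, AlgHom.toLinearMap_apply, map_mul]

lemma uOp_eq_antipodeConj_one (p : H ⊗[k] H) : uOp k H p = antipodeConj k 1 p := by
  induction p using TensorProduct.induction_on with
  | zero => simp [uOp]
  | add p q hp hq => simp_all [uOp]
  | tmul x y => simp [uOp, tau]

lemma map_antipode_antipode_tau (p : H ⊗[k] H) :
    TensorProduct.map (antipode k) (antipode k) (tau k H p) =
      tau k H (TensorProduct.map (antipode k) (antipode k) p) :=
  TensorProduct.map_comm _ _ p

namespace IsUniversalRMatrix

variable {R : H ⊗[k] H}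

lemma map_antipode_id_mul_cancel (hR : IsUniversalRMatrix k H R) :
    TensorProduct.map (antipode k) LinearMap.id R * R = 1 := by
  have h := congrArg (mulSId k H) hR.hexagon1
  rw [mulSId_deltaId, mulSId_emb13_mul_emb23] at h
  have hε : epsId k H R = 1 := by
    refine (hR.isUnit.map (epsId k H)).mul_eq_right.1 ?_
    simpa [epsId_map_antipode_id] using congrArg (epsId k H) h.symm
  rw [← h, hε, Algebra.TensorProduct.one_def]

lemma mul_map_antipode_id_cancel (hR : IsUniversalRMatrix k H R) :
    R * TensorProduct.map (antipode k) LinearMap.id R = 1 :=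
  hR.isUnit.mul_right_cancel (by rw [mul_assoc, hR.map_antipode_id_mul_cancel, mul_one, one_mul])

lemma idDelta_map_antipode_id (hR : IsUniversalRMatrix k H R) :
    IdDelta k H (TensorProduct.map (antipode k) LinearMap.id R) =
      emb12 k H (TensorProduct.map (antipode k) LinearMap.id R) *
        emb13 k H (TensorProduct.map (antipode k) LinearMap.id R) := by
  set R' := TensorProduct.map (antipode k) LinearMap.id R
  refine (left_inv_eq_right_inv (b := emb12 k H R' * emb13 k H R') (a := IdDelta k H R)
    (c := IdDelta k H R') ?_ ?_).symm
  · rw [hR.hexagon2, mul_assoc, ← mul_assoc (emb13 k H R'), ← map_mul,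
      hR.map_antipode_id_mul_cancel, map_one, one_mul, ← map_mul, hR.map_antipode_id_mul_cancel,
      map_one]
  · rw [← idDelta_mul, hR.mul_map_antipode_id_cancel, idDelta_one]

lemma map_antipode_id_mul_map_id_antipode (hR : IsUniversalRMatrix k H R) :
    TensorProduct.map (antipode k) LinearMap.id R *
      TensorProduct.map LinearMap.id (antipode k) (TensorProduct.map (antipode k) LinearMap.id R)
      = 1 := by
  set R' := TensorProduct.map (antipode k) LinearMap.id R
  have h := congrArg (idMulS k H) hR.idDelta_map_antipode_id
  rw [idMulS_idDelta, idMulS_emb12_mul_emb13] at h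
  have hR' : IsUnit R' :=
    isUnit_iff_exists.2 ⟨R, hR.map_antipode_id_mul_cancel, hR.mul_map_antipode_id_cancel⟩
  have hε : idEps k H R' = 1 := by
    refine (hR'.map (idEps k H)).mul_eq_right.1 ?_
    simpa [idEps_map_id_antipode] using congrArg (idEps k H) h.symm
  rw [← h, hε, Algebra.TensorProduct.one_def]

lemma map_antipode_antipode (hR : IsUniversalRMatrix k H R) :
    TensorProduct.map (antipode k) (antipode k) R = R := by
  have h := hR.map_antipode_id_mul_map_id_antipode
  rw [TensorProduct.map_map, LinearMap.id_comp, LinearMap.comp_id] at h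
  calc TensorProduct.map (antipode k) (antipode k) R
      = R * TensorProduct.map (antipode k) LinearMap.id R *
          TensorProduct.map (antipode k) (antipode k) R := by
        rw [hR.mul_map_antipode_id_cancel, one_mul]
    _ = R := by rw [mul_assoc, h, mul_one]

lemma antipodeConj_uOp_comul (hR : IsUniversalRMatrix k H R) (a : H) :
    antipodeConj k (uOp k H R) (comul a) = counit (R := k) a • uOp k H R := by
  rw [uOp_eq_antipodeConj_one, ← antipodeConj_mul, hR.intertwine, antipodeConj_mul, DeltaT,
    LinearMap.comp_apply, tau, LinearEquiv.coe_coe, antipodeConj_one_comm_comul,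
    antipodeConj_smul]

lemma uOp_mul (hR : IsUniversalRMatrix k H R) (a : H) :
    uOp k H R * a = antipode k (antipode k a) * uOp k H R :=
  mul_eq_antipode_antipode_mul hR.antipodeConj_uOp_comul a

end IsUniversalRMatrix

end UniversalRMatrix

/-- `u ⊗ u` commutes with `τ(R)·R` in `H ⊗ H`. -/
theorem uOp_tmul_comm_RTR (R : H ⊗[k] H) (hR : IsUniversalRMatrix k H R) :
    (uOp k H R ⊗ₜ[k] uOp k H R) * (tau k H R * R) =
      (tau k H R * R) * (uOp k H R ⊗ₜ[k] uOp k H R) := by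
  have hS := hR.map_antipode_antipode
  rw [tmul_mul_eq_map_mul (f := antipode k ∘ₗ antipode k) (g := antipode k ∘ₗ antipode k)
    hR.uOp_mul hR.uOp_mul, ← TensorProduct.map_map, map_antipode_antipode_mul,
    map_antipode_antipode_tau, hS, map_antipode_antipode_mul, map_antipode_antipode_tau, hS]
end
end

section
/- Let R be a universal R-matrix for H, and let φ : H⊗H⊗H⊗H → H⊗H be the k-linear map determined by φ(c₁⊗c₂⊗c₃⊗c₄) = S(c₃)c₁ ⊗ S(c₄)c₂. Then for every c ∈ H⊗H⊗H⊗H, φ(R₁₂ᵀ·R₂₃·c) = φ(c), where R₁₂ᵀ denotes the image of τ(R) in tensor slots (1,2) of H⊗H⊗H⊗H and R₂₃ the image of R in slots (2,3). -/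
open TensorProduct

noncomputable section

variable (k H : Type*) [CommRing k] [Ring H] [HopfAlgebra k H]

/-- Embedding of `H ⊗ H` into slots (1,2) of `H⊗H⊗H⊗H`: `x ⊗ y ↦ x ⊗ y ⊗ 1 ⊗ 1`. -/
def emb12' : H ⊗[k] H →ₐ[k] H ⊗[k] (H ⊗[k] (H ⊗[k] H)) :=
  Algebra.TensorProduct.map (AlgHom.id k H) Algebra.TensorProduct.includeLeft

/-- Embedding of `H ⊗ H` into slots (2,3) of `H⊗H⊗H⊗H`: `x ⊗ y ↦ 1 ⊗ x ⊗ y ⊗ 1`. -/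
def emb23' : H ⊗[k] H →ₐ[k] H ⊗[k] (H ⊗[k] (H ⊗[k] H)) :=
  (Algebra.TensorProduct.includeRight :
      H ⊗[k] (H ⊗[k] H) →ₐ[k] H ⊗[k] (H ⊗[k] (H ⊗[k] H))).comp
    (Algebra.TensorProduct.map (AlgHom.id k H) Algebra.TensorProduct.includeLeft)

/-- Embedding of `H ⊗ H` into slots (1,3) of `H⊗H⊗H⊗H`: `x ⊗ y ↦ x ⊗ 1 ⊗ y ⊗ 1`. -/
def emb13' : H ⊗[k] H →ₐ[k] H ⊗[k] (H ⊗[k] (H ⊗[k] H)) :=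
  Algebra.TensorProduct.map (AlgHom.id k H)
    ((Algebra.TensorProduct.includeRight :
        H ⊗[k] H →ₐ[k] H ⊗[k] (H ⊗[k] H)).comp
      (Algebra.TensorProduct.includeLeft : H →ₐ[k] H ⊗[k] H))

/-!
Write `R = ∑ xᵢ ⊗ yᵢ`. Since `S` is an antihomomorphism,
`φ (R₁₂ᵀ R₂₃ (c₁ ⊗ c₂ ⊗ c₃ ⊗ c₄)) = (S c₃ ⊗ S c₄) · T · (c₁ ⊗ c₂)` with `T = ∑ S(yⱼ) yᵢ ⊗ xᵢ xⱼ`,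
and `T` is the image of `R₁₃ R₁₂ = (id ⊗ Δ) R` under `x ⊗ y ⊗ z ↦ S(y) z ⊗ x`. By the antipode
axiom this map sends `(id ⊗ Δ) R` to `τ ((id ⊗ ε) R)`, and `(id ⊗ ε) R = 1`: applying
`id ⊗ id ⊗ ε` to the same hexagon relation gives `R = (id ⊗ ε) R · R`, and `R` is invertible.
-/

open Coalgebra HopfAlgebra

def idCounit : H ⊗[k] H →ₐ[k] H ⊗[k] H :=
  Algebra.TensorProduct.map (AlgHom.id k H)
    ((Algebra.ofId k H).comp (Bialgebra.counitAlgHom k H))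

def ridCounit : H ⊗[k] H →ₐ[k] H :=
  (Algebra.TensorProduct.rid k k H).toAlgHom.comp
    (Algebra.TensorProduct.map (AlgHom.id k H) (Bialgebra.counitAlgHom k H))

def idIdCounit : H ⊗[k] (H ⊗[k] H) →ₐ[k] H ⊗[k] H :=
  Algebra.TensorProduct.map (AlgHom.id k H) (ridCounit k H)

def contractAntipode : H ⊗[k] (H ⊗[k] H) →ₗ[k] H ⊗[k] H :=
  (TensorProduct.comm k H H).toLinearMap ∘ₗ
    TensorProduct.map LinearMap.id (LinearMap.mul' k H ∘ₗ (antipode k).rTensor H)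

section
variable {k H}

lemma ridCounit_comul (b : H) : ridCounit k H (comul b) = b := by
  change Algebra.TensorProduct.rid k k H (LinearMap.lTensor H counit (comul b)) = b
  simp [lTensor_counit_comul]

@[simp] lemma contractAntipode_tmul (x y z : H) :
    contractAntipode k H (x ⊗ₜ (y ⊗ₜ z)) = (antipode k y * z) ⊗ₜ x := by
  simp [contractAntipode]

lemma idIdCounit_IdDelta (z : H ⊗[k] H) : idIdCounit k H (IdDelta k H z) = z := by
  induction z using TensorProduct.induction_on with
  | zero => simp
  | tmul a b => simp [IdDelta, idIdCounit, ridCounit_comul]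
  | add x y hx hy => simp only [map_add, hx, hy]

lemma idIdCounit_emb13 (z : H ⊗[k] H) : idIdCounit k H (emb13 k H z) = idCounit k H z := by
  induction z using TensorProduct.induction_on with
  | zero => simp
  | tmul x y =>
    simp [emb13, idIdCounit, idCounit, ridCounit, Algebra.ofId_apply,
      Algebra.algebraMap_eq_smul_one]
  | add x y hx hy => simp only [map_add, hx, hy]

lemma idIdCounit_emb12 (z : H ⊗[k] H) : idIdCounit k H (emb12 k H z) = z := by
  induction z using TensorProduct.induction_on with
  | zero => simp
  | tmul x y => simp [emb12, idIdCounit, ridCounit]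
  | add x y hx hy => simp only [map_add, hx, hy]

lemma idCounit_eq_one_of_hexagon {R : H ⊗[k] H} (hu : IsUnit R)
    (hex : IdDelta k H R = emb13 k H R * emb12 k H R) : idCounit k H R = 1 := by
  have h := congrArg (idIdCounit k H) hex
  rw [idIdCounit_IdDelta, map_mul, idIdCounit_emb13, idIdCounit_emb12] at h
  exact hu.mul_right_cancel (by rw [← h, one_mul])

lemma contractAntipode_IdDelta (z : H ⊗[k] H) :
    contractAntipode k H (IdDelta k H z) = tau k H (idCounit k H z) := by
  induction z using TensorProduct.induction_on with
  | zero => simp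
  | tmul a b =>
    simp [IdDelta, idCounit, tau, contractAntipode, Algebra.ofId_apply]
  | add x y hx hy => simp only [map_add, hx, hy]

lemma contractAntipode_emb13_mul_emb12 {R : H ⊗[k] H} (hu : IsUnit R)
    (hex : IdDelta k H R = emb13 k H R * emb12 k H R) :
    contractAntipode k H (emb13 k H R * emb12 k H R) = 1 := by
  rw [← hex, contractAntipode_IdDelta, idCounit_eq_one_of_hexagon hu hex]
  simp [tau, Algebra.TensorProduct.one_def]

lemma phi_emb12'_tau_mul_emb23'_mul_tmul (φ : H ⊗[k] (H ⊗[k] (H ⊗[k] H)) →ₗ[k] H ⊗[k] H)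
    (hφ : ∀ c₁ c₂ c₃ c₄ : H,
      φ (c₁ ⊗ₜ (c₂ ⊗ₜ (c₃ ⊗ₜ c₄))) = (antipode k c₃ * c₁) ⊗ₜ[k] (antipode k c₄ * c₂))
    (x y : H ⊗[k] H) (c₁ c₂ c₃ c₄ : H) :
    φ (emb12' k H (tau k H x) * emb23' k H y * (c₁ ⊗ₜ (c₂ ⊗ₜ (c₃ ⊗ₜ c₄)))) =
      (antipode k c₃ ⊗ₜ antipode k c₄) * contractAntipode k H (emb13 k H x * emb12 k H y) *
        (c₁ ⊗ₜ c₂) := by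
  set c := c₁ ⊗ₜ[k] (c₂ ⊗ₜ[k] (c₃ ⊗ₜ[k] c₄))
  -- `zero_mul`, `add_mul`, ... do not rewrite in the fourfold tensor product, so the
  -- linearity in `x` and `y` is exposed through `LinearMap.mulLeft`/`mulRight` instead.
  induction x using TensorProduct.induction_on with
  | zero =>
    change φ (LinearMap.mulRight k c
      (LinearMap.mulRight k (emb23' k H y) (emb12' k H (tau k H 0)))) = _
    simp only [map_zero, zero_mul, mul_zero]
  | add x x' hx hx' =>
    change φ (LinearMap.mulRight k c
      (LinearMap.mulRight k (emb23' k H y) (emb12' k H (tau k H (x + x'))))) = _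
    simp only [map_add, add_mul, mul_add]
    exact congrArg₂ (· + ·) hx hx'
  | tmul x₁ x₂ =>
    induction y using TensorProduct.induction_on with
    | zero =>
      change φ (LinearMap.mulRight k c
        (LinearMap.mulLeft k (emb12' k H (tau k H (x₁ ⊗ₜ x₂))) (emb23' k H 0))) = _
      simp only [map_zero, zero_mul, mul_zero]
    | add y y' hy hy' =>
      change φ (LinearMap.mulRight k c
        (LinearMap.mulLeft k (emb12' k H (tau k H (x₁ ⊗ₜ x₂))) (emb23' k H (y + y')))) = _
      simp only [map_add, add_mul, mul_add]
      exact congrArg₂ (· + ·) hy hy'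
    | tmul y₁ y₂ =>
      simp [c, tau, emb12', emb23', emb13, emb12, hφ, antipode_mul_antidistrib, mul_assoc]

end

theorem phi_RT12_R23 (R : H ⊗[k] H) (hR : IsUniversalRMatrix k H R)
    (φ : H ⊗[k] (H ⊗[k] (H ⊗[k] H)) →ₗ[k] H ⊗[k] H)
    (hφ : ∀ c₁ c₂ c₃ c₄ : H,
      φ (c₁ ⊗ₜ (c₂ ⊗ₜ (c₃ ⊗ₜ c₄))) =
        (HopfAlgebra.antipode (R := k) c₃ * c₁) ⊗ₜ[k]
          (HopfAlgebra.antipode (R := k) c₄ * c₂)) :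
    ∀ c : H ⊗[k] (H ⊗[k] (H ⊗[k] H)),
      φ (emb12' k H (tau k H R) * emb23' k H R * c) = φ c := by
  suffices φ ∘ₗ LinearMap.mulLeft k (emb12' k H (tau k H R) * emb23' k H R) = φ from
    fun c => LinearMap.congr_fun this c
  ext c₁ c₂ c₃ c₄
  simp [phi_emb12'_tau_mul_emb23'_mul_tmul φ hφ,
    contractAntipode_emb13_mul_emb12 hR.isUnit hR.hexagon2, hφ]
end
end

section
/- Let τ : ℝ^{m+n} → ℝ^{m+n} be the block-reversal map (τΛ)_i = Λ_{m+1−i} for 1 ≤ i ≤ m and (τΛ)_{m+μ} = Λ_{m+n+1−μ} for 1 ≤ μ ≤ n (the longest Weyl group element of the even subalgebra gl(m)⊕gl(n)). Then for every Λ ∈ ℝ^{m+n}, writing Λ₋ := τ(Λ): −B(Λ₋ − 2ρ₁, Λ₋ − 2ρ₁) + 2·B(ρ₀ − ρ₁, Λ₋ − 2ρ₁) = −B(Λ, Λ + 2ρ). -/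
noncomputable section

set_option linter.unreachableTactic false
set_option linter.unusedTactic false

/-- The invariant bilinear form of `gl(m|n)` on vectors indexed 1,…,m+n:
`B(x,y) = Σ_{i=1}^m xᵢyᵢ − Σ_{j=m+1}^{m+n} xⱼyⱼ`. -/
def glForm (m n : ℕ) (x y : ℕ → ℝ) : ℝ :=
  (∑ i ∈ Finset.Icc 1 m, x i * y i) -
    ∑ j ∈ Finset.Icc (m + 1) (m + n), x j * y j

/-- The half-sum `ρ₀` of even positive roots of `gl(m|n)`:
`(ρ₀)_i = (m − 2i + 1)/2` for `1 ≤ i ≤ m`, `(ρ₀)_{m+μ} = (n − 2μ + 1)/2` for `1 ≤ μ ≤ n`. -/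
def rho0 (m n : ℕ) : ℕ → ℝ := fun i =>
  if 1 ≤ i ∧ i ≤ m then ((m : ℝ) - 2 * i + 1) / 2
  else if m + 1 ≤ i ∧ i ≤ m + n then ((n : ℝ) - 2 * ((i : ℝ) - m) + 1) / 2
  else 0

/-- The half-sum `ρ₁` of odd positive roots of `gl(m|n)`:
`(ρ₁)_i = n/2` for `1 ≤ i ≤ m`, `(ρ₁)_{m+μ} = −m/2` for `1 ≤ μ ≤ n`. -/
def rho1 (m n : ℕ) : ℕ → ℝ := fun i =>
  if 1 ≤ i ∧ i ≤ m then (n : ℝ) / 2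
  else if m + 1 ≤ i ∧ i ≤ m + n then -(m : ℝ) / 2
  else 0

/-- The graded Weyl vector `ρ = ρ₀ − ρ₁`. -/
def rho (m n : ℕ) : ℕ → ℝ := fun i => rho0 m n i - rho1 m n i

/-- The block-reversal map `τ` (longest Weyl group element of `gl(m)⊕gl(n)`):
`(τΛ)_i = Λ_{m+1−i}` for `1 ≤ i ≤ m`, `(τΛ)_{m+μ} = Λ_{m+n+1−μ}` for `1 ≤ μ ≤ n`. -/
def blockRev (m n : ℕ) (Λ : ℕ → ℝ) : ℕ → ℝ := fun i =>
  if 1 ≤ i ∧ i ≤ m then Λ (m + 1 - i)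
  else if m + 1 ≤ i ∧ i ≤ m + n then Λ (m + n + 1 - (i - m))
  else 0

lemma refl1 (m : ℕ) (F : ℕ → ℝ) :
    ∑ i ∈ Finset.Icc 1 m, F (m + 1 - i) = ∑ i ∈ Finset.Icc 1 m, F i := by
  refine Finset.sum_nbij' (fun i => m + 1 - i) (fun i => m + 1 - i) ?_ ?_ ?_ ?_ ?_ <;>
    simp only [Finset.mem_Icc] <;> intro a ha <;> (try dsimp only) <;>
    first | omega | (congr 1; omega)

lemma refl2 (m n : ℕ) (F : ℕ → ℝ) :
    ∑ i ∈ Finset.Icc (m+1) (m+n), F (2*m + n + 1 - i) =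
      ∑ i ∈ Finset.Icc (m+1) (m+n), F i := by
  refine Finset.sum_nbij' (fun i => 2*m + n + 1 - i) (fun i => 2*m + n + 1 - i) ?_ ?_ ?_ ?_ ?_ <;>
    simp only [Finset.mem_Icc] <;> intro a ha <;> (try dsimp only) <;>
    first | omega | (congr 1; omega)

lemma expandSum (s : Finset ℕ) (f : ℕ → ℝ) (a b c d e : ℝ) :
    ∑ i ∈ s, (a * f i ^ 2 + b * f i + c * ((i : ℝ) * f i) + d * (i : ℝ) + e) =
      a * (∑ i ∈ s, f i ^ 2) + b * (∑ i ∈ s, f i) + c * (∑ i ∈ s, (i : ℝ) * f i)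
        + d * (∑ i ∈ s, (i : ℝ)) + e * s.card := by
  simp only [Finset.sum_add_distrib, ← Finset.mul_sum, Finset.sum_const, nsmul_eq_mul]
  ring

lemma gauss1 (m : ℕ) : ∑ i ∈ Finset.Icc 1 m, (i : ℝ) = m * (m + 1) / 2 := by
  induction m with
  | zero => simp
  | succ k ih =>
    rw [Finset.sum_Icc_succ_top (by omega), ih]
    push_cast; ring

lemma gauss2 (m n : ℕ) :
    ∑ i ∈ Finset.Icc (m+1) (m+n), (i : ℝ) = n * m + n * (n + 1) / 2 := by
  induction n with
  | zero => simp
  | succ k ih =>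
    rw [show m + (k+1) = (m + k) + 1 by omega, Finset.sum_Icc_succ_top (by omega), ih]
    push_cast; ring

lemma card1 (m : ℕ) : (((Finset.Icc 1 m).card : ℕ) : ℝ) = m := by simp

lemma card2 (m n : ℕ) : (((Finset.Icc (m+1) (m+n)).card : ℕ) : ℝ) = n := by
  rw [Nat.card_Icc, show m + n + 1 - (m+1) = n by omega]

/-- For every `Λ`, with `Λ₋ := τ(Λ)`:
`−B(Λ₋ − 2ρ₁, Λ₋ − 2ρ₁) + 2B(ρ₀ − ρ₁, Λ₋ − 2ρ₁) = −B(Λ, Λ + 2ρ)`. -/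
theorem kac_module_minimal_weight_identity (m n : ℕ) (hm : 0 < m) (hn : 0 < n)
    (Λ : ℕ → ℝ) :
    -glForm m n (fun a => blockRev m n Λ a - 2 * rho1 m n a)
        (fun a => blockRev m n Λ a - 2 * rho1 m n a) +
      2 * glForm m n (fun a => rho0 m n a - rho1 m n a)
        (fun a => blockRev m n Λ a - 2 * rho1 m n a) =
    -glForm m n Λ (fun a => Λ a + 2 * rho m n a) := by
  have hA1 : (∑ i ∈ Finset.Icc 1 m,
        (blockRev m n Λ i - 2 * rho1 m n i) * (blockRev m n Λ i - 2 * rho1 m n i))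
      = (∑ i ∈ Finset.Icc 1 m, Λ i ^ 2) - 2*(n:ℝ)*(∑ i ∈ Finset.Icc 1 m, Λ i)
          + (n:ℝ)^2*(m:ℝ) := by
    calc
      _ = ∑ i ∈ Finset.Icc 1 m,
            (fun (j : ℕ) => (Λ (m + 1 - j) - (n:ℝ)) * (Λ (m + 1 - j) - (n:ℝ))) i := by
        refine Finset.sum_congr rfl fun i hi => ?_
        simp only [Finset.mem_Icc] at hi
        simp only [blockRev, rho1, if_pos hi]
        ring
      _ = ∑ i ∈ Finset.Icc 1 m,
            (fun (j : ℕ) => (Λ (m + 1 - j) - (n:ℝ)) * (Λ (m + 1 - j) - (n:ℝ))) (m + 1 - i) :=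
        (refl1 m _).symm
      _ = ∑ i ∈ Finset.Icc 1 m,
            (1 * Λ i ^ 2 + (-(2*(n:ℝ))) * Λ i + 0 * ((i:ℝ) * Λ i) + 0 * (i:ℝ) + (n:ℝ)^2) := by
        refine Finset.sum_congr rfl fun i hi => ?_
        simp only [Finset.mem_Icc] at hi
        dsimp only
        rw [show m + 1 - (m + 1 - i) = i by omega]
        ring
      _ = _ := by
        rw [expandSum, gauss1, card1]; ring
  have hA2 : (∑ i ∈ Finset.Icc (m+1) (m+n),
        (blockRev m n Λ i - 2 * rho1 m n i) * (blockRev m n Λ i - 2 * rho1 m n i))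
      = (∑ i ∈ Finset.Icc (m+1) (m+n), Λ i ^ 2)
          + 2*(m:ℝ)*(∑ i ∈ Finset.Icc (m+1) (m+n), Λ i) + (m:ℝ)^2*(n:ℝ) := by
    calc
      _ = ∑ i ∈ Finset.Icc (m+1) (m+n),
            (fun (j : ℕ) => (Λ (2*m + n + 1 - j) + (m:ℝ)) * (Λ (2*m + n + 1 - j) + (m:ℝ))) i := by
        refine Finset.sum_congr rfl fun i hi => ?_
        simp only [Finset.mem_Icc] at hi
        simp only [blockRev, rho1, if_neg (show ¬(1 ≤ i ∧ i ≤ m) by omega),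
          if_pos (show m + 1 ≤ i ∧ i ≤ m + n by omega)]
        rw [show m + n + 1 - (i - m) = 2*m + n + 1 - i by omega]
        ring
      _ = ∑ i ∈ Finset.Icc (m+1) (m+n),
            (fun (j : ℕ) => (Λ (2*m + n + 1 - j) + (m:ℝ)) * (Λ (2*m + n + 1 - j) + (m:ℝ)))
              (2*m + n + 1 - i) :=
        (refl2 m n _).symm
      _ = ∑ i ∈ Finset.Icc (m+1) (m+n),
            (1 * Λ i ^ 2 + (2*(m:ℝ)) * Λ i + 0 * ((i:ℝ) * Λ i) + 0 * (i:ℝ) + (m:ℝ)^2) := by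
        refine Finset.sum_congr rfl fun i hi => ?_
        simp only [Finset.mem_Icc] at hi
        dsimp only
        rw [show 2*m + n + 1 - (2*m + n + 1 - i) = i by omega]
        ring
      _ = _ := by
        rw [expandSum, gauss2, card2]; ring
  have hB1 : (∑ i ∈ Finset.Icc 1 m,
        (rho0 m n i - rho1 m n i) * (blockRev m n Λ i - 2 * rho1 m n i))
      = (∑ i ∈ Finset.Icc 1 m, (i:ℝ) * Λ i)
          - (((m:ℝ)+(n:ℝ)+1)/2)*(∑ i ∈ Finset.Icc 1 m, Λ i)
          - (n:ℝ)*((m:ℝ)*((m:ℝ)+1)/2) + ((n:ℝ)*(((m:ℝ)+(n:ℝ)+1))/2)*(m:ℝ) := by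
    calc
      _ = ∑ i ∈ Finset.Icc 1 m,
            (fun (j : ℕ) => (((m:ℝ) - 2*(j:ℝ) + 1)/2 - (n:ℝ)/2) * (Λ (m + 1 - j) - (n:ℝ))) i := by
        refine Finset.sum_congr rfl fun i hi => ?_
        simp only [Finset.mem_Icc] at hi
        simp only [blockRev, rho0, rho1, if_pos hi]
        ring
      _ = ∑ i ∈ Finset.Icc 1 m,
            (fun (j : ℕ) => (((m:ℝ) - 2*(j:ℝ) + 1)/2 - (n:ℝ)/2) * (Λ (m + 1 - j) - (n:ℝ)))
              (m + 1 - i) :=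
        (refl1 m _).symm
      _ = ∑ i ∈ Finset.Icc 1 m,
            (0 * Λ i ^ 2 + (-(((m:ℝ)+(n:ℝ)+1)/2)) * Λ i + 1 * ((i:ℝ) * Λ i)
              + (-(n:ℝ)) * (i:ℝ) + (n:ℝ)*(((m:ℝ)+(n:ℝ)+1))/2) := by
        refine Finset.sum_congr rfl fun i hi => ?_
        simp only [Finset.mem_Icc] at hi
        dsimp only
        rw [show m + 1 - (m + 1 - i) = i by omega,
          Nat.cast_sub (show i ≤ m + 1 by omega)]
        push_cast
        ring
      _ = _ := by
        rw [expandSum, gauss1, card1]; ring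
  have hB2 : (∑ i ∈ Finset.Icc (m+1) (m+n),
        (rho0 m n i - rho1 m n i) * (blockRev m n Λ i - 2 * rho1 m n i))
      = (∑ i ∈ Finset.Icc (m+1) (m+n), (i:ℝ) * Λ i)
          - (((m:ℝ)+(n:ℝ)+1)/2)*(∑ i ∈ Finset.Icc (m+1) (m+n), Λ i)
          + (m:ℝ)*((n:ℝ)*(m:ℝ) + (n:ℝ)*((n:ℝ)+1)/2)
          - ((m:ℝ)*(((m:ℝ)+(n:ℝ)+1))/2)*(n:ℝ) := by
    calc
      _ = ∑ i ∈ Finset.Icc (m+1) (m+n),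
            (fun (j : ℕ) => (((n:ℝ) - 2*((j:ℝ) - (m:ℝ)) + 1)/2 + (m:ℝ)/2)
              * (Λ (2*m + n + 1 - j) + (m:ℝ))) i := by
        refine Finset.sum_congr rfl fun i hi => ?_
        simp only [Finset.mem_Icc] at hi
        simp only [blockRev, rho0, rho1, if_neg (show ¬(1 ≤ i ∧ i ≤ m) by omega),
          if_pos (show m + 1 ≤ i ∧ i ≤ m + n by omega)]
        rw [show m + n + 1 - (i - m) = 2*m + n + 1 - i by omega]
        ring
      _ = ∑ i ∈ Finset.Icc (m+1) (m+n),
            (fun (j : ℕ) => (((n:ℝ) - 2*((j:ℝ) - (m:ℝ)) + 1)/2 + (m:ℝ)/2)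
              * (Λ (2*m + n + 1 - j) + (m:ℝ))) (2*m + n + 1 - i) :=
        (refl2 m n _).symm
      _ = ∑ i ∈ Finset.Icc (m+1) (m+n),
            (0 * Λ i ^ 2 + (-(((m:ℝ)+(n:ℝ)+1)/2)) * Λ i + 1 * ((i:ℝ) * Λ i)
              + (m:ℝ) * (i:ℝ) + (-((m:ℝ)*(((m:ℝ)+(n:ℝ)+1))/2))) := by
        refine Finset.sum_congr rfl fun i hi => ?_
        simp only [Finset.mem_Icc] at hi
        dsimp only
        rw [show 2*m + n + 1 - (2*m + n + 1 - i) = i by omega,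
          Nat.cast_sub (show i ≤ 2*m + n + 1 by omega)]
        push_cast
        ring
      _ = _ := by
        rw [expandSum, gauss2, card2]; ring
  have hC1 : (∑ i ∈ Finset.Icc 1 m, Λ i * (Λ i + 2 * (rho0 m n i - rho1 m n i)))
      = (∑ i ∈ Finset.Icc 1 m, Λ i ^ 2)
          + ((m:ℝ)+1-(n:ℝ))*(∑ i ∈ Finset.Icc 1 m, Λ i)
          - 2*(∑ i ∈ Finset.Icc 1 m, (i:ℝ) * Λ i) := by
    calc
      _ = ∑ i ∈ Finset.Icc 1 m,
            (1 * Λ i ^ 2 + ((m:ℝ)+1-(n:ℝ)) * Λ i + (-2) * ((i:ℝ) * Λ i)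
              + 0 * (i:ℝ) + 0) := by
        refine Finset.sum_congr rfl fun i hi => ?_
        simp only [Finset.mem_Icc] at hi
        simp only [rho0, rho1, if_pos hi]
        ring
      _ = _ := by
        rw [expandSum, gauss1, card1]; ring
  have hC2 : (∑ i ∈ Finset.Icc (m+1) (m+n), Λ i * (Λ i + 2 * (rho0 m n i - rho1 m n i)))
      = (∑ i ∈ Finset.Icc (m+1) (m+n), Λ i ^ 2)
          + (3*(m:ℝ)+(n:ℝ)+1)*(∑ i ∈ Finset.Icc (m+1) (m+n), Λ i)
          - 2*(∑ i ∈ Finset.Icc (m+1) (m+n), (i:ℝ) * Λ i) := by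
    calc
      _ = ∑ i ∈ Finset.Icc (m+1) (m+n),
            (1 * Λ i ^ 2 + (3*(m:ℝ)+(n:ℝ)+1) * Λ i + (-2) * ((i:ℝ) * Λ i)
              + 0 * (i:ℝ) + 0) := by
        refine Finset.sum_congr rfl fun i hi => ?_
        simp only [Finset.mem_Icc] at hi
        simp only [rho0, rho1, if_neg (show ¬(1 ≤ i ∧ i ≤ m) by omega),
          if_pos (show m + 1 ≤ i ∧ i ≤ m + n by omega)]
        ring
      _ = _ := by
        rw [expandSum, gauss2, card2]; ring
  simp only [glForm, rho]
  rw [hA1, hA2, hB1, hB2, hC1, hC2]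
  ring
end
end
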